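/- arXiv:1107.4026 — 7 statements merged into one kernel-verified Lean document; each statement's English description precedes it below -/
import Mathlib

section
/- If f : Δ = [a,b]×[c,d] → ℝ is convex on the co-ordinates on Δ, then (1/2)[(1/(b-a)) ∫_a^b f(x,(c+d)/2) dx + (1/(d-c)) ∫_c^d f((a+b)/2, y) dy] ≤ (1/((b-a)(d-c))) ∫_a^b ∫_c^d f(x,y) dy dx. -/
open intervalIntegral MeasureTheory Set

lemma hh_left (a b : ℝ) (hab : a < b) (g : ℝ → ℝ)
    (hg : ConvexOn ℝ (Icc a b) g) (hgi : IntervalIntegrable g volume a b) :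
    g ((a + b) / 2) * (b - a) ≤ ∫ x in a..b, g x := by
  have hrefl : IntervalIntegrable (fun x => g (a + b - x)) volume a b := by
    have := (hgi.comp_sub_left (a + b)).symm
    simpa using this
  have hmono : ∀ x ∈ Icc a b, g ((a + b) / 2) ≤ (g x + g (a + b - x)) / 2 := by
    intro x hx
    have hx' : a + b - x ∈ Icc a b := by
      constructor <;> [linarith [hx.2]; linarith [hx.1]]
    have := hg.2 hx hx' (by norm_num : (0:ℝ) ≤ 1/2) (by norm_num : (0:ℝ) ≤ 1/2)
      (by norm_num)
    simp only [smul_eq_mul] at this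
    have heq : (1/2 : ℝ) * x + 1/2 * (a + b - x) = (a + b) / 2 := by ring
    rw [heq] at this
    linarith
  have h1 : (∫ _x in a..b, g ((a + b) / 2)) ≤ ∫ x in a..b, (g x + g (a + b - x)) / 2 := by
    apply integral_mono_on hab.le intervalIntegrable_const _ hmono
    exact (hgi.add hrefl).div_const 2
  have h2 : (∫ x in a..b, g (a + b - x)) = ∫ x in a..b, g x := by
    have := integral_comp_sub_left (a := a) (b := b) g (a + b)
    simpa using this
  have h3 : (∫ x in a..b, (g x + g (a + b - x)) / 2) = ∫ x in a..b, g x := by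
    rw [intervalIntegral.integral_div, intervalIntegral.integral_add hgi hrefl, h2]
    ring
  rw [intervalIntegral.integral_const, smul_eq_mul, h3] at h1
  linarith [h1]

theorem coord_convex_hadamard_second (a b c d : ℝ) (hab : a < b) (hcd : c < d)
    (f : ℝ → ℝ → ℝ)
    (hx : ∀ y ∈ Icc c d, ConvexOn ℝ (Icc a b) (fun x => f x y))
    (hy : ∀ x ∈ Icc a b, ConvexOn ℝ (Icc c d) (fun y => f x y))
    (hintx : ∀ y ∈ Icc c d, IntervalIntegrable (fun x => f x y) volume a b)
    (hinty : ∀ x ∈ Icc a b, IntervalIntegrable (fun y => f x y) volume c d)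
    (hint2 : IntervalIntegrable (fun x => ∫ y in c..d, f x y) volume a b) :
    (1 / 2) * ((1 / (b - a)) * ∫ x in a..b, f x ((c + d) / 2) +
      (1 / (d - c)) * ∫ y in c..d, f ((a + b) / 2) y) ≤
    (1 / ((b - a) * (d - c))) * ∫ x in a..b, ∫ y in c..d, f x y := by
  have hA : (0:ℝ) < b - a := by linarith
  have hB : (0:ℝ) < d - c := by linarith
  set I := ∫ x in a..b, ∫ y in c..d, f x y with hI
  -- Step 1: pointwise HH in y, then integrate in x
  have step1 : (∫ x in a..b, f x ((c + d) / 2)) * (d - c) ≤ I := by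
    have hpt : ∀ x ∈ Icc a b, f x ((c + d) / 2) * (d - c) ≤ ∫ y in c..d, f x y := by
      intro x hxm
      exact hh_left c d hcd (fun y => f x y) (hy x hxm) (hinty x hxm)
    have := integral_mono_on hab.le
      (((hintx ((c+d)/2) (Set.mem_Icc.mpr ⟨by linarith, by linarith⟩)).mul_const (d - c))) hint2 hpt
    calc (∫ x in a..b, f x ((c + d) / 2)) * (d - c)
        = ∫ x in a..b, f x ((c + d) / 2) * (d - c) := by
          rw [intervalIntegral.integral_mul_const]
      _ ≤ I := this
  -- Step 2: g x := ∫ y, f x y is convex on [a,b]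
  have step2 : (∫ y in c..d, f ((a + b) / 2) y) * (b - a) ≤ I := by
    have hgconv : ConvexOn ℝ (Icc a b) (fun x => ∫ y in c..d, f x y) := by
      refine ⟨convex_Icc a b, ?_⟩
      intro x1 hx1 x2 hx2 p q hp hq hpq
      have hmem : p • x1 + q • x2 ∈ Icc a b := (convex_Icc a b) hx1 hx2 hp hq hpq
      have hptw : ∀ y ∈ Icc c d,
          f (p • x1 + q • x2) y ≤ p * f x1 y + q * f x2 y := by
        intro y hym
        have := (hx y hym).2 hx1 hx2 hp hq hpq
        simpa using this
      have hint : IntervalIntegrable (fun y => p * f x1 y + q * f x2 y) volume c d :=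
        ((hinty x1 hx1).const_mul p).add ((hinty x2 hx2).const_mul q)
      calc (∫ y in c..d, f (p • x1 + q • x2) y)
          ≤ ∫ y in c..d, (p * f x1 y + q * f x2 y) :=
            integral_mono_on hcd.le (hinty _ hmem) hint hptw
        _ = p • (∫ y in c..d, f x1 y) + q • (∫ y in c..d, f x2 y) := by
            rw [intervalIntegral.integral_add ((hinty x1 hx1).const_mul p)
              ((hinty x2 hx2).const_mul q), intervalIntegral.integral_const_mul,
              intervalIntegral.integral_const_mul]
            simp [smul_eq_mul]
    exact hh_left a b hab (fun x => ∫ y in c..d, f x y) hgconv hint2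
  -- combine (note: the first ∫ in the goal swallows the second term into its body)
  set C := (1 / (d - c)) * ∫ y in c..d, f ((a + b) / 2) y with hC
  have hmem : ((c + d) / 2) ∈ Icc c d := Set.mem_Icc.mpr ⟨by linarith, by linarith⟩
  have hsplit : (∫ x in a..b, (f x ((c + d) / 2) + C))
      = (∫ x in a..b, f x ((c + d) / 2)) + (b - a) * C := by
    rw [intervalIntegral.integral_add (hintx _ hmem) intervalIntegrable_const,
      intervalIntegral.integral_const, smul_eq_mul]
  rw [hsplit]
  have h1' : 1 / (b - a) * (∫ x in a..b, f x ((c + d) / 2)) ≤ I / ((b - a) * (d - c)) := by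
    rw [one_div, inv_mul_eq_div, div_le_div_iff₀ hA (mul_pos hA hB)]
    nlinarith [step1]
  have h2' : C ≤ I / ((b - a) * (d - c)) := by
    rw [hC, one_div, inv_mul_eq_div, div_le_div_iff₀ hB (mul_pos hA hB)]
    nlinarith [step2]
  have key : 1 / (b - a) * ((∫ x in a..b, f x ((c + d) / 2)) + (b - a) * C)
      = 1 / (b - a) * (∫ x in a..b, f x ((c + d) / 2)) + C := by
    field_simp
  have hR : 1 / ((b - a) * (d - c)) * I = I / ((b - a) * (d - c)) := by ring
  rw [key, hR]
  linarith
end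

section
/- If f : Δ = [a,b]×[c,d] → ℝ is convex on the co-ordinates on Δ, then (1/((b-a)(d-c))) ∫_a^b ∫_c^d f(x,y) dy dx ≤ (1/4)[(1/(b-a)) ∫_a^b f(x,c) dx + (1/(b-a)) ∫_a^b f(x,d) dx + (1/(d-c)) ∫_c^d f(a,y) dy + (1/(d-c)) ∫_c^d f(b,y) dy]. -/
open intervalIntegral MeasureTheory Set

lemma trapezoid (c d : ℝ) (hcd : c < d) (g : ℝ → ℝ) (hg : ConvexOn ℝ (Icc c d) g)
    (hint : IntervalIntegrable g volume c d) :
    ∫ y in c..d, g y ≤ (d - c) / 2 * (g c + g d) := by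
  have hdc : (0:ℝ) < d - c := by linarith
  set k := (g d - g c) / (d - c) with hk
  have hpt : ∀ y ∈ Icc c d, g y ≤ g c + k * (y - c) := by
    intro y hy
    obtain ⟨h1, h2⟩ := hy
    have ht : (0:ℝ) ≤ (d - y) / (d - c) := div_nonneg (by linarith) hdc.le
    have hs : (0:ℝ) ≤ (y - c) / (d - c) := div_nonneg (by linarith) hdc.le
    have hts : (d - y) / (d - c) + (y - c) / (d - c) = 1 := by field_simp; ring
    have := hg.2 (left_mem_Icc.mpr hcd.le) (right_mem_Icc.mpr hcd.le) ht hs hts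
    have hcomb : ((d - y) / (d - c)) • c + ((y - c) / (d - c)) • d = y := by
      simp only [smul_eq_mul]; field_simp; ring
    rw [hcomb] at this
    simp only [smul_eq_mul] at this
    calc g y ≤ (d - y) / (d - c) * g c + (y - c) / (d - c) * g d := this
      _ = g c + k * (y - c) := by rw [hk]; field_simp; ring
  have hlin : IntervalIntegrable (fun y => g c + k * (y - c)) volume c d := by
    apply Continuous.intervalIntegrable; continuity
  have hmono := integral_mono_on hcd.le hint hlin hpt
  have hcomp : ∫ y in c..d, (g c + k * (y - c)) = (d - c) / 2 * (g c + g d) := by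
    have h0 : (fun y => g c + k * (y - c)) = fun y => (g c - k * c) + k * y := by
      funext y; ring
    have hA : IntervalIntegrable (fun _ : ℝ => g c - k * c) volume c d := by
      apply Continuous.intervalIntegrable; continuity
    have hB : IntervalIntegrable (fun y : ℝ => k * y) volume c d := by
      apply Continuous.intervalIntegrable; continuity
    rw [h0, integral_add hA hB, _root_.intervalIntegral.integral_const,
      intervalIntegral.integral_const_mul, integral_id, smul_eq_mul, hk]
    field_simp; ring
  calc ∫ y in c..d, g y ≤ ∫ y in c..d, (g c + k * (y - c)) := hmono
    _ = (d - c) / 2 * (g c + g d) := hcomp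

theorem coord_convex_hadamard_third (a b c d : ℝ) (hab : a < b) (hcd : c < d)
    (f : ℝ → ℝ → ℝ)
    (hx : ∀ y ∈ Icc c d, ConvexOn ℝ (Icc a b) (fun x => f x y))
    (hy : ∀ x ∈ Icc a b, ConvexOn ℝ (Icc c d) (fun y => f x y))
    (hintx : ∀ y ∈ Icc c d, IntervalIntegrable (fun x => f x y) volume a b)
    (hinty : ∀ x ∈ Icc a b, IntervalIntegrable (fun y => f x y) volume c d)
    (hint2 : IntervalIntegrable (fun x => ∫ y in c..d, f x y) volume a b) :
    (1 / ((b - a) * (d - c))) * ∫ x in a..b, ∫ y in c..d, f x y ≤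
      (1 / 4) * ((1 / (b - a)) * ∫ x in a..b, f x c +
        (1 / (b - a)) * ∫ x in a..b, f x d +
        (1 / (d - c)) * ∫ y in c..d, f a y +
        (1 / (d - c)) * ∫ y in c..d, f b y) := by
  have hba : (0:ℝ) < b - a := by linarith
  have hdc : (0:ℝ) < d - c := by linarith
  have hcm : c ∈ Icc c d := left_mem_Icc.mpr hcd.le
  have hdm : d ∈ Icc c d := right_mem_Icc.mpr hcd.le
  have ham : a ∈ Icc a b := left_mem_Icc.mpr hab.le
  have hbm : b ∈ Icc a b := right_mem_Icc.mpr hab.le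
  set g : ℝ → ℝ := fun x => ∫ y in c..d, f x y with hgdef
  -- g is convex on [a,b]
  have hgconv : ConvexOn ℝ (Icc a b) g := by
    refine ⟨convex_Icc a b, fun x₁ hx₁ x₂ hx₂ t s ht hs hts => ?_⟩
    have hzm : t • x₁ + s • x₂ ∈ Icc a b := (convex_Icc a b) hx₁ hx₂ ht hs hts
    have hpt : ∀ y ∈ Icc c d,
        f (t • x₁ + s • x₂) y ≤ t * f x₁ y + s * f x₂ y := fun y hy =>
      (hx y hy).2 hx₁ hx₂ ht hs hts
    have hintc : IntervalIntegrable (fun y => t * f x₁ y + s * f x₂ y) volume c d :=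
      ((hinty x₁ hx₁).const_mul t).add ((hinty x₂ hx₂).const_mul s)
    calc g (t • x₁ + s • x₂) ≤ ∫ y in c..d, (t * f x₁ y + s * f x₂ y) :=
          integral_mono_on hcd.le (hinty _ hzm) hintc hpt
      _ = t * g x₁ + s * g x₂ := by
          rw [integral_add ((hinty x₁ hx₁).const_mul t) ((hinty x₂ hx₂).const_mul s),
            intervalIntegral.integral_const_mul, intervalIntegral.integral_const_mul]
      _ = t • g x₁ + s • g x₂ := by simp [smul_eq_mul]
  -- Route 2: trapezoid in x for g
  have h2 : ∫ x in a..b, g x ≤ (b - a) / 2 * ((∫ y in c..d, f a y) + ∫ y in c..d, f b y) :=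
    trapezoid a b hab g hgconv hint2
  -- Route 1: trapezoid in y pointwise, then integrate in x
  have hintcd : IntervalIntegrable (fun x => (d - c) / 2 * (f x c + f x d)) volume a b :=
    ((hintx c hcm).add (hintx d hdm)).const_mul _
  have h1 : ∫ x in a..b, g x ≤ ∫ x in a..b, (d - c) / 2 * (f x c + f x d) := by
    refine integral_mono_on hab.le hint2 hintcd fun x hxm => ?_
    exact trapezoid c d hcd (fun y => f x y) (hy x hxm) (hinty x hxm)
  have h1' : ∫ x in a..b, g x ≤
      (d - c) / 2 * ((∫ x in a..b, f x c) + ∫ x in a..b, f x d) := by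
    rw [← integral_add (hintx c hcm) (hintx d hdm), ← intervalIntegral.integral_const_mul]
    exact h1
  have w : (0:ℝ) < 1 / ((b - a) * (d - c)) := by positivity
  have key1 : (1 / ((b - a) * (d - c))) * (∫ x in a..b, g x) ≤
      1 / 2 * ((1 / (b - a)) * (∫ x in a..b, f x c) + (1 / (b - a)) * ∫ x in a..b, f x d) := by
    refine (mul_le_mul_of_nonneg_left h1' w.le).trans (le_of_eq ?_)
    field_simp
  have key2 : (1 / ((b - a) * (d - c))) * (∫ x in a..b, g x) ≤
      1 / 2 * ((1 / (d - c)) * (∫ y in c..d, f a y) + (1 / (d - c)) * ∫ y in c..d, f b y) := by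
    refine (mul_le_mul_of_nonneg_left h2 w.le).trans (le_of_eq ?_)
    field_simp
  have hgoal : (∫ x in a..b, ∫ y in c..d, f x y) = ∫ x in a..b, g x := rfl
  have hRHS : ((1 / (b - a)) * ∫ x in a..b, f x c +
        (1 / (b - a)) * ∫ x in a..b, f x d +
        (1 / (d - c)) * ∫ y in c..d, f a y +
        (1 / (d - c)) * ∫ y in c..d, f b y) =
      (1 / (b - a)) * ((∫ x in a..b, f x c) + ∫ x in a..b, f x d) +
        (1 / (d - c)) * ((∫ y in c..d, f a y) + ∫ y in c..d, f b y) := by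
    rw [integral_add (hintx c hcm) intervalIntegrable_const,
      integral_add (hintx d hdm) intervalIntegrable_const,
      integral_add (hinty a ham) intervalIntegrable_const,
      _root_.intervalIntegral.integral_const, _root_.intervalIntegral.integral_const,
      _root_.intervalIntegral.integral_const, smul_eq_mul, smul_eq_mul, smul_eq_mul]
    field_simp; ring
  rw [hgoal, hRHS]
  linarith [key1, key2]
end

section
/- If f : Δ = [a,b]×[c,d] → ℝ is convex on the co-ordinates on Δ, then (1/4)[(1/(b-a)) ∫_a^b f(x,c) dx + (1/(b-a)) ∫_a^b f(x,d) dx + (1/(d-c)) ∫_c^d f(a,y) dy + (1/(d-c)) ∫_c^d f(b,y) dy] ≤ (f(a,c)+f(b,c)+f(a,d)+f(b,d))/4. -/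
open intervalIntegral MeasureTheory Set

lemma trap_aux (a b : ℝ) (hab : a < b) (g : ℝ → ℝ)
    (hg : ConvexOn ℝ (Icc a b) g) (hi : IntervalIntegrable g volume a b) :
    (1 / (b - a)) * ∫ x in a..b, g x ≤ (g a + g b) / 2 := by
  have hba : (0:ℝ) < b - a := by linarith
  have hptwise : ∀ x ∈ Icc a b,
      g x ≤ ((b - x) * g a + (x - a) * g b) / (b - a) := by
    intro x hx
    have h1 : (0:ℝ) ≤ (b - x) / (b - a) := by
      apply div_nonneg <;> [linarith [hx.2]; linarith]
    have h2 : (0:ℝ) ≤ (x - a) / (b - a) := by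
      apply div_nonneg <;> [linarith [hx.1]; linarith]
    have hsum : (b - x) / (b - a) + (x - a) / (b - a) = 1 := by
      field_simp
      ring
    have hcomb : ((b - x) / (b - a)) • a + ((x - a) / (b - a)) • b = x := by
      rw [smul_eq_mul, smul_eq_mul, div_mul_eq_mul_div, div_mul_eq_mul_div, ← add_div,
        div_eq_iff hba.ne']
      ring
    have := hg.2 (left_mem_Icc.2 hab.le) (right_mem_Icc.2 hab.le) h1 h2 hsum
    rw [hcomb] at this
    calc g x ≤ ((b - x) / (b - a)) • g a + ((x - a) / (b - a)) • g b := this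
      _ = ((b - x) * g a + (x - a) * g b) / (b - a) := by
          simp [smul_eq_mul]; ring
  have hint2 : IntervalIntegrable
      (fun x => ((b - x) * g a + (x - a) * g b) / (b - a)) volume a b := by
    apply Continuous.intervalIntegrable
    continuity
  have hmono : (∫ x in a..b, g x) ≤
      ∫ x in a..b, ((b - x) * g a + (x - a) * g b) / (b - a) :=
    intervalIntegral.integral_mono_on hab.le hi hint2 hptwise
  have hval : (∫ x in a..b, ((b - x) * g a + (x - a) * g b) / (b - a))
      = (b - a) * (g a + g b) / 2 := by
    have : (fun x => ((b - x) * g a + (x - a) * g b) / (b - a)) =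
        fun x => x * ((g b - g a) / (b - a)) + ((b * g a - a * g b) / (b - a)) := by
      funext x; field_simp; ring
    rw [this]
    rw [intervalIntegral.integral_add (by apply Continuous.intervalIntegrable; continuity)
      (intervalIntegrable_const)]
    rw [intervalIntegral.integral_const]
    rw [intervalIntegral.integral_mul_const, integral_id]
    have hne : b - a ≠ 0 := hba.ne'
    simp only [smul_eq_mul]
    field_simp
    ring
  rw [div_mul_eq_mul_div, one_mul, div_le_iff₀ hba]
  calc (∫ x in a..b, g x) ≤ (b - a) * (g a + g b) / 2 := by rw [← hval]; exact hmono
    _ = (g a + g b) / 2 * (b - a) := by ring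

theorem coord_convex_hadamard_fourth (a b c d : ℝ) (hab : a < b) (hcd : c < d)
    (f : ℝ → ℝ → ℝ)
    (hx : ∀ y ∈ Icc c d, ConvexOn ℝ (Icc a b) (fun x => f x y))
    (hy : ∀ x ∈ Icc a b, ConvexOn ℝ (Icc c d) (fun y => f x y))
    (hintx : ∀ y ∈ Icc c d, IntervalIntegrable (fun x => f x y) volume a b)
    (hinty : ∀ x ∈ Icc a b, IntervalIntegrable (fun y => f x y) volume c d) :
    (1 / 4) * ((1 / (b - a)) * ∫ x in a..b, f x c +
        (1 / (b - a)) * ∫ x in a..b, f x d +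
        (1 / (d - c)) * ∫ y in c..d, f a y +
        (1 / (d - c)) * ∫ y in c..d, f b y) ≤
      (f a c + f b c + f a d + f b d) / 4 := by
  have h1 := trap_aux a b hab (fun x => f x c)
    (hx c (left_mem_Icc.2 hcd.le)) (hintx c (left_mem_Icc.2 hcd.le))
  have h2 := trap_aux a b hab (fun x => f x d)
    (hx d (right_mem_Icc.2 hcd.le)) (hintx d (right_mem_Icc.2 hcd.le))
  have h3 := trap_aux c d hcd (fun y => f a y)
    (hy a (left_mem_Icc.2 hab.le)) (hinty a (left_mem_Icc.2 hab.le))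
  have h4 := trap_aux c d hcd (fun y => f b y)
    (hy b (right_mem_Icc.2 hab.le)) (hinty b (right_mem_Icc.2 hab.le))
  have hba : b - a ≠ 0 := by linarith
  have hdc : d - c ≠ 0 := by linarith
  have e1 : (∫ y in c..d, (f a y + (1 / (d - c)) * ∫ y in c..d, f b y))
      = (∫ y in c..d, f a y) + (d - c) * ((1 / (d - c)) * ∫ y in c..d, f b y) := by
    rw [intervalIntegral.integral_add (hinty a (left_mem_Icc.2 hab.le))
      intervalIntegrable_const, intervalIntegral.integral_const, smul_eq_mul]
  rw [e1]
  have e2 : (∫ x in a..b, (f x d + (1 / (d - c)) *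
        ((∫ y in c..d, f a y) + (d - c) * ((1 / (d - c)) * ∫ y in c..d, f b y))))
      = (∫ x in a..b, f x d) + (b - a) * ((1 / (d - c)) *
        ((∫ y in c..d, f a y) + (d - c) * ((1 / (d - c)) * ∫ y in c..d, f b y))) := by
    rw [intervalIntegral.integral_add (hintx d (right_mem_Icc.2 hcd.le))
      intervalIntegrable_const, intervalIntegral.integral_const, smul_eq_mul]
  rw [e2]
  have e3 : (∫ x in a..b, (f x c + (1 / (b - a)) *
        ((∫ x in a..b, f x d) + (b - a) * ((1 / (d - c)) *
          ((∫ y in c..d, f a y) + (d - c) * ((1 / (d - c)) * ∫ y in c..d, f b y))))))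
      = (∫ x in a..b, f x c) + (b - a) * ((1 / (b - a)) *
        ((∫ x in a..b, f x d) + (b - a) * ((1 / (d - c)) *
          ((∫ y in c..d, f a y) + (d - c) * ((1 / (d - c)) * ∫ y in c..d, f b y))))) := by
    rw [intervalIntegral.integral_add (hintx c (left_mem_Icc.2 hcd.le))
      intervalIntegrable_const, intervalIntegral.integral_const, smul_eq_mul]
  rw [e3]
  have key : (1 / 4 : ℝ) * ((1 / (b - a)) * ((∫ x in a..b, f x c) + (b - a) * ((1 / (b - a)) *
        ((∫ x in a..b, f x d) + (b - a) * ((1 / (d - c)) *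
          ((∫ y in c..d, f a y) + (d - c) * ((1 / (d - c)) * ∫ y in c..d, f b y)))))))
      = (1 / 4) * ((1 / (b - a)) * (∫ x in a..b, f x c)
          + (1 / (b - a)) * (∫ x in a..b, f x d)
          + (1 / (d - c)) * (∫ y in c..d, f a y)
          + (1 / (d - c)) * (∫ y in c..d, f b y)) := by
    field_simp
    ring
  rw [key]
  linarith
end

section
/- Let f : Δ = [a,b]×[c,d] → ℝ be convex on the co-ordinates, and define G : [0,1]² → ℝ by G(t,s) = (1/4)[f(ta+(1-t)(a+b)/2, sc+(1-s)(c+d)/2) + f(tb+(1-t)(a+b)/2, sc+(1-s)(c+d)/2) + f(ta+(1-t)(a+b)/2, sd+(1-s)(c+d)/2) + f(tb+(1-t)(a+b)/2, sd+(1-s)(c+d)/2)]. Then G is convex on the co-ordinates on [0,1]², i.e., for each fixed s, t ↦ G(t,s) is convex, and for each fixed t, s ↦ G(t,s) is convex. -/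
open Set


lemma mem_of_seg {a b : ℝ} (hab : a ≤ b) {t : ℝ} (ht : t ∈ Icc (0:ℝ) 1)
    {p : ℝ} (hp : p ∈ Icc a b) : t * p + (1 - t) * ((a + b) / 2) ∈ Icc a b := by
  have hm : (a + b) / 2 ∈ Icc a b := ⟨by linarith [hab], by linarith [hab]⟩
  have h := (convex_Icc a b) hp hm ht.1 (sub_nonneg.2 ht.2) (add_sub_cancel t 1)
  simpa [smul_eq_mul] using h

lemma affine_pull {a b : ℝ} {g : ℝ → ℝ} (hg : ConvexOn ℝ (Icc a b) g)
    {p : ℝ} (hp : p ∈ Icc a b) (hab : a ≤ b) :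
    ConvexOn ℝ (Icc (0:ℝ) 1) (fun t => g (t * p + (1 - t) * ((a + b) / 2))) := by
  refine ⟨convex_Icc 0 1, ?_⟩
  intro t1 ht1 t2 ht2 μ ν hμ hν hs
  have h1 := mem_of_seg hab ht1 hp
  have h2 := mem_of_seg hab ht2 hp
  have key := hg.2 h1 h2 hμ hν hs
  simp only [smul_eq_mul] at key ⊢
  have : (μ * t1 + ν * t2) * p + (1 - (μ * t1 + ν * t2)) * ((a + b) / 2)
      = μ * (t1 * p + (1 - t1) * ((a + b) / 2)) + ν * (t2 * p + (1 - t2) * ((a + b) / 2)) := by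
    have : ν = 1 - μ := by linarith
    subst this; ring
  rw [this]; exact key

theorem G_coordinate_convex (a b c d : ℝ) (hab : a < b) (hcd : c < d)
    (f : ℝ → ℝ → ℝ)
    (hx : ∀ y ∈ Icc c d, ConvexOn ℝ (Icc a b) (fun x => f x y))
    (hy : ∀ x ∈ Icc a b, ConvexOn ℝ (Icc c d) (fun y => f x y))
    (G : ℝ → ℝ → ℝ)
    (hG : ∀ t s, G t s = (1 / 4) *
      (f (t * a + (1 - t) * ((a + b) / 2)) (s * c + (1 - s) * ((c + d) / 2)) +
       f (t * b + (1 - t) * ((a + b) / 2)) (s * c + (1 - s) * ((c + d) / 2)) +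
       f (t * a + (1 - t) * ((a + b) / 2)) (s * d + (1 - s) * ((c + d) / 2)) +
       f (t * b + (1 - t) * ((a + b) / 2)) (s * d + (1 - s) * ((c + d) / 2)))) :
    (∀ s ∈ Icc (0:ℝ) 1, ConvexOn ℝ (Icc (0:ℝ) 1) (fun t => G t s)) ∧
    (∀ t ∈ Icc (0:ℝ) 1, ConvexOn ℝ (Icc (0:ℝ) 1) (fun s => G t s)) := by
  have ha : a ∈ Icc a b := left_mem_Icc.2 hab.le
  have hb : b ∈ Icc a b := right_mem_Icc.2 hab.le
  have hc : c ∈ Icc c d := left_mem_Icc.2 hcd.le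
  have hd : d ∈ Icc c d := right_mem_Icc.2 hcd.le
  constructor
  · intro s hs
    have hy1 := mem_of_seg hcd.le hs hc
    have hy2 := mem_of_seg hcd.le hs hd
    have h1 := affine_pull (hx _ hy1) ha hab.le
    have h2 := affine_pull (hx _ hy1) hb hab.le
    have h3 := affine_pull (hx _ hy2) ha hab.le
    have h4 := affine_pull (hx _ hy2) hb hab.le
    have e : (fun t => G t s) = fun t => (1/4 : ℝ) •
      ((f (t * a + (1 - t) * ((a + b) / 2)) (s * c + (1 - s) * ((c + d) / 2)) +
        f (t * b + (1 - t) * ((a + b) / 2)) (s * c + (1 - s) * ((c + d) / 2)) +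
        f (t * a + (1 - t) * ((a + b) / 2)) (s * d + (1 - s) * ((c + d) / 2)) +
        f (t * b + (1 - t) * ((a + b) / 2)) (s * d + (1 - s) * ((c + d) / 2)))) := by
      funext t; rw [hG]; simp [smul_eq_mul]
    rw [e]
    exact (((h1.add h2).add h3).add h4).smul (by norm_num)
  · intro t ht
    have hx1 := mem_of_seg hab.le ht ha
    have hx2 := mem_of_seg hab.le ht hb
    have h1 := affine_pull (hy _ hx1) hc hcd.le
    have h2 := affine_pull (hy _ hx2) hc hcd.le
    have h3 := affine_pull (hy _ hx1) hd hcd.le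
    have h4 := affine_pull (hy _ hx2) hd hcd.le
    have e : (fun s => G t s) = fun s => (1/4 : ℝ) •
      ((f (t * a + (1 - t) * ((a + b) / 2)) (s * c + (1 - s) * ((c + d) / 2)) +
        f (t * b + (1 - t) * ((a + b) / 2)) (s * c + (1 - s) * ((c + d) / 2)) +
        f (t * a + (1 - t) * ((a + b) / 2)) (s * d + (1 - s) * ((c + d) / 2)) +
        f (t * b + (1 - t) * ((a + b) / 2)) (s * d + (1 - s) * ((c + d) / 2)))) := by
      funext s; rw [hG]; simp [smul_eq_mul]
    rw [e]
    exact (((h1.add h2).add h3).add h4).smul (by norm_num)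
end

section
/- Let f : Δ = [a,b]×[c,d] → ℝ be convex on the co-ordinates and define G as the average of f at the four points (ta+(1-t)(a+b)/2, sc+(1-s)(c+d)/2), (tb+(1-t)(a+b)/2, sc+(1-s)(c+d)/2), (ta+(1-t)(a+b)/2, sd+(1-s)(c+d)/2), (tb+(1-t)(a+b)/2, sd+(1-s)(c+d)/2). Then inf over (t,s) ∈ [0,1]² of G(t,s) equals f((a+b)/2,(c+d)/2) = G(0,0), and sup over (t,s) ∈ [0,1]² of G(t,s) equals (f(a,c)+f(a,d)+f(b,c)+f(b,d))/4 = G(1,1). -/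
open Set

lemma key_aux {a b : ℝ} (hab : a ≤ b) {g : ℝ → ℝ} (hg : ConvexOn ℝ (Icc a b) g)
    {t : ℝ} (ht : t ∈ Icc (0:ℝ) 1) :
    g ((a + b) / 2) ≤
        (1/2) * g (t * a + (1 - t) * ((a + b) / 2)) +
        (1/2) * g (t * b + (1 - t) * ((a + b) / 2)) ∧
      g (t * a + (1 - t) * ((a + b) / 2)) + g (t * b + (1 - t) * ((a + b) / 2)) ≤
        g a + g b := by
  obtain ⟨ht0, ht1⟩ := ht
  have hxa : t * a + (1 - t) * ((a + b) / 2) ∈ Icc a b := by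
    constructor <;> nlinarith
  have hxb : t * b + (1 - t) * ((a + b) / 2) ∈ Icc a b := by
    constructor <;> nlinarith
  have ha : a ∈ Icc a b := ⟨le_refl _, hab⟩
  have hb : b ∈ Icc a b := ⟨hab, le_refl _⟩
  constructor
  · have h := hg.2 hxa hxb (by norm_num : (0:ℝ) ≤ 1/2) (by norm_num : (0:ℝ) ≤ 1/2)
      (by norm_num : (1:ℝ)/2 + 1/2 = 1)
    have heq : (1/2 : ℝ) • (t * a + (1 - t) * ((a + b) / 2)) +
        (1/2 : ℝ) • (t * b + (1 - t) * ((a + b) / 2)) = (a + b) / 2 := by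
      simp only [smul_eq_mul]; ring
    rw [heq] at h
    simpa using h
  · have h1 := hg.2 ha hb (by linarith : (0:ℝ) ≤ (1 + t)/2) (by linarith : (0:ℝ) ≤ (1 - t)/2)
      (by ring : (1 + t)/2 + (1 - t)/2 = 1)
    have h2 := hg.2 ha hb (by linarith : (0:ℝ) ≤ (1 - t)/2) (by linarith : (0:ℝ) ≤ (1 + t)/2)
      (by ring : (1 - t)/2 + (1 + t)/2 = 1)
    have e1 : ((1 + t)/2 : ℝ) • a + ((1 - t)/2 : ℝ) • b = t * a + (1 - t) * ((a + b) / 2) := by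
      simp only [smul_eq_mul]; ring
    have e2 : ((1 - t)/2 : ℝ) • a + ((1 + t)/2 : ℝ) • b = t * b + (1 - t) * ((a + b) / 2) := by
      simp only [smul_eq_mul]; ring
    rw [e1] at h1; rw [e2] at h2
    simp only [smul_eq_mul] at h1 h2
    linarith

theorem G_bounds (a b c d : ℝ) (hab : a < b) (hcd : c < d)
    (f : ℝ → ℝ → ℝ)
    (hx : ∀ y ∈ Icc c d, ConvexOn ℝ (Icc a b) (fun x => f x y))
    (hy : ∀ x ∈ Icc a b, ConvexOn ℝ (Icc c d) (fun y => f x y))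
    (G : ℝ → ℝ → ℝ)
    (hG : ∀ t s, G t s = (1 / 4) *
      (f (t * a + (1 - t) * ((a + b) / 2)) (s * c + (1 - s) * ((c + d) / 2)) +
       f (t * b + (1 - t) * ((a + b) / 2)) (s * c + (1 - s) * ((c + d) / 2)) +
       f (t * a + (1 - t) * ((a + b) / 2)) (s * d + (1 - s) * ((c + d) / 2)) +
       f (t * b + (1 - t) * ((a + b) / 2)) (s * d + (1 - s) * ((c + d) / 2)))) :
    (sInf ((fun p : ℝ × ℝ => G p.1 p.2) '' (Icc (0:ℝ) 1 ×ˢ Icc (0:ℝ) 1)) =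
        f ((a + b) / 2) ((c + d) / 2) ∧
      G 0 0 = f ((a + b) / 2) ((c + d) / 2)) ∧
    (sSup ((fun p : ℝ × ℝ => G p.1 p.2) '' (Icc (0:ℝ) 1 ×ˢ Icc (0:ℝ) 1)) =
        (f a c + f a d + f b c + f b d) / 4 ∧
      G 1 1 = (f a c + f a d + f b c + f b d) / 4) := by
  have hab' : a ≤ b := le_of_lt hab
  have hcd' : c ≤ d := le_of_lt hcd
  have hma : (a + b) / 2 ∈ Icc a b := ⟨by linarith, by linarith⟩
  have hmc : (c + d) / 2 ∈ Icc c d := ⟨by linarith, by linarith⟩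
  have hG00 : G 0 0 = f ((a + b) / 2) ((c + d) / 2) := by
    rw [hG]; norm_num; ring
  have hG11 : G 1 1 = (f a c + f a d + f b c + f b d) / 4 := by
    rw [hG]; norm_num; ring
  -- membership helpers
  have hmemx : ∀ t ∈ Icc (0:ℝ) 1, t * a + (1 - t) * ((a + b) / 2) ∈ Icc a b ∧
      t * b + (1 - t) * ((a + b) / 2) ∈ Icc a b := by
    rintro t ⟨ht0, ht1⟩
    exact ⟨⟨by nlinarith, by nlinarith⟩, ⟨by nlinarith, by nlinarith⟩⟩
  have hmemy : ∀ s ∈ Icc (0:ℝ) 1, s * c + (1 - s) * ((c + d) / 2) ∈ Icc c d ∧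
      s * d + (1 - s) * ((c + d) / 2) ∈ Icc c d := by
    rintro s ⟨hs0, hs1⟩
    exact ⟨⟨by nlinarith, by nlinarith⟩, ⟨by nlinarith, by nlinarith⟩⟩
  have hlow : ∀ t ∈ Icc (0:ℝ) 1, ∀ s ∈ Icc (0:ℝ) 1,
      f ((a + b) / 2) ((c + d) / 2) ≤ G t s := by
    intro t ht s hs
    obtain ⟨hyc, hyd⟩ := hmemy s hs
    -- convexity in y at x = midpoint
    have h1 := (key_aux hcd' (hy _ hma) hs).1
    -- convexity in x at y = yc, yd
    have h2 := (key_aux hab' (hx _ hyc) ht).1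
    have h3 := (key_aux hab' (hx _ hyd) ht).1
    rw [hG]
    linarith
  have hhigh : ∀ t ∈ Icc (0:ℝ) 1, ∀ s ∈ Icc (0:ℝ) 1,
      G t s ≤ (f a c + f a d + f b c + f b d) / 4 := by
    intro t ht s hs
    obtain ⟨hyc, hyd⟩ := hmemy s hs
    have h2 := (key_aux hab' (hx _ hyc) ht).2
    have h3 := (key_aux hab' (hx _ hyd) ht).2
    have h4 := (key_aux hcd' (hy a ⟨le_refl _, hab'⟩) hs).2
    have h5 := (key_aux hcd' (hy b ⟨hab', le_refl _⟩) hs).2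
    rw [hG]
    linarith
  have hmem00 : f ((a + b) / 2) ((c + d) / 2) ∈
      (fun p : ℝ × ℝ => G p.1 p.2) '' (Icc (0:ℝ) 1 ×ˢ Icc (0:ℝ) 1) :=
    ⟨(0, 0), ⟨⟨le_refl _, zero_le_one⟩, ⟨le_refl _, zero_le_one⟩⟩, hG00⟩
  have hmem11 : (f a c + f a d + f b c + f b d) / 4 ∈
      (fun p : ℝ × ℝ => G p.1 p.2) '' (Icc (0:ℝ) 1 ×ˢ Icc (0:ℝ) 1) :=
    ⟨(1, 1), ⟨⟨zero_le_one, le_refl _⟩, ⟨zero_le_one, le_refl _⟩⟩, hG11⟩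
  refine ⟨⟨?_, hG00⟩, ?_, hG11⟩
  · apply IsLeast.csInf_eq
    refine ⟨hmem00, ?_⟩
    rintro z ⟨⟨t, s⟩, ⟨ht, hs⟩, rfl⟩
    exact hlow t ht s hs
  · apply IsGreatest.csSup_eq
    refine ⟨hmem11, ?_⟩
    rintro z ⟨⟨t, s⟩, ⟨ht, hs⟩, rfl⟩
    exact hhigh t ht s hs
end

section
/- Let f : Δ = [a,b]×[c,d] → ℝ be L-Lipschitzian, i.e., |f(x₁,y₁) − f(x₂,y₂)| ≤ L₁|x₁−x₂| + L₂|y₁−y₂| for constants L₁, L₂ ≥ 0. Define G(t,s) = (1/4)[f(ta+(1-t)(a+b)/2, sc+(1-s)(c+d)/2) + f(tb+(1-t)(a+b)/2, sc+(1-s)(c+d)/2) + f(ta+(1-t)(a+b)/2, sd+(1-s)(c+d)/2) + f(tb+(1-t)(a+b)/2, sd+(1-s)(c+d)/2)]. Then |G(t₂,s₂) − G(t₁,s₁)| ≤ L₁(b-a)|t₂−t₁| + L₂(d-c)|s₂−s₁| for all (t₁,s₁), (t₂,s₂) ∈ [0,1]², so G is Lipschitzian on [0,1]². -/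
open Set

theorem G_lipschitz (a b c d : ℝ) (hab : a < b) (hcd : c < d)
    (L1 L2 : ℝ) (hL1 : 0 ≤ L1) (hL2 : 0 ≤ L2)
    (f : ℝ → ℝ → ℝ)
    (hf : ∀ x1 ∈ Icc a b, ∀ y1 ∈ Icc c d, ∀ x2 ∈ Icc a b, ∀ y2 ∈ Icc c d,
      |f x1 y1 - f x2 y2| ≤ L1 * |x1 - x2| + L2 * |y1 - y2|)
    (G : ℝ → ℝ → ℝ)
    (hG : ∀ t s, G t s = (1 / 4) *
      (f (t * a + (1 - t) * ((a + b) / 2)) (s * c + (1 - s) * ((c + d) / 2)) +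
       f (t * b + (1 - t) * ((a + b) / 2)) (s * c + (1 - s) * ((c + d) / 2)) +
       f (t * a + (1 - t) * ((a + b) / 2)) (s * d + (1 - s) * ((c + d) / 2)) +
       f (t * b + (1 - t) * ((a + b) / 2)) (s * d + (1 - s) * ((c + d) / 2)))) :
    ∀ t1 ∈ Icc (0:ℝ) 1, ∀ s1 ∈ Icc (0:ℝ) 1, ∀ t2 ∈ Icc (0:ℝ) 1, ∀ s2 ∈ Icc (0:ℝ) 1,
      |G t2 s2 - G t1 s1| ≤ L1 * (b - a) * |t2 - t1| + L2 * (d - c) * |s2 - s1| := by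
  intro t1 ht1 s1 hs1 t2 ht2 s2 hs2
  obtain ⟨ht10, ht11⟩ := ht1
  obtain ⟨hs10, hs11⟩ := hs1
  obtain ⟨ht20, ht21⟩ := ht2
  obtain ⟨hs20, hs21⟩ := hs2
  have hmemx : ∀ t : ℝ, 0 ≤ t → t ≤ 1 → ∀ e ∈ Icc a b,
      t * e + (1 - t) * ((a + b) / 2) ∈ Icc a b := by
    intro t h0 h1 e ⟨he1, he2⟩
    constructor <;> nlinarith
  have hmemy : ∀ s : ℝ, 0 ≤ s → s ≤ 1 → ∀ e ∈ Icc c d,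
      s * e + (1 - s) * ((c + d) / 2) ∈ Icc c d := by
    intro s h0 h1 e ⟨he1, he2⟩
    constructor <;> nlinarith
  have haa : a ∈ Icc a b := ⟨le_refl a, le_of_lt hab⟩
  have hbb : b ∈ Icc a b := ⟨le_of_lt hab, le_refl b⟩
  have hcc : c ∈ Icc c d := ⟨le_refl c, le_of_lt hcd⟩
  have hdd : d ∈ Icc c d := ⟨le_of_lt hcd, le_refl d⟩
  have habsx : ∀ e : ℝ, |e - (a + b) / 2| = (b - a) / 2 → ∀ t t' : ℝ,
      |(t * e + (1 - t) * ((a + b) / 2)) - (t' * e + (1 - t') * ((a + b) / 2))|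
        = |t - t'| * ((b - a) / 2) := by
    intro e he t t'
    have : (t * e + (1 - t) * ((a + b) / 2)) - (t' * e + (1 - t') * ((a + b) / 2))
        = (t - t') * (e - (a + b) / 2) := by ring
    rw [this, abs_mul, he]
  have habsy : ∀ e : ℝ, |e - (c + d) / 2| = (d - c) / 2 → ∀ s s' : ℝ,
      |(s * e + (1 - s) * ((c + d) / 2)) - (s' * e + (1 - s') * ((c + d) / 2))|
        = |s - s'| * ((d - c) / 2) := by
    intro e he s s'
    have : (s * e + (1 - s) * ((c + d) / 2)) - (s' * e + (1 - s') * ((c + d) / 2))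
        = (s - s') * (e - (c + d) / 2) := by ring
    rw [this, abs_mul, he]
  have hea : |a - (a + b) / 2| = (b - a) / 2 := by
    rw [abs_of_nonpos (by linarith)]; ring
  have heb : |b - (a + b) / 2| = (b - a) / 2 := by
    rw [abs_of_nonneg (by linarith)]; ring
  have hec : |c - (c + d) / 2| = (d - c) / 2 := by
    rw [abs_of_nonpos (by linarith)]; ring
  have hed : |d - (c + d) / 2| = (d - c) / 2 := by
    rw [abs_of_nonneg (by linarith)]; ring
  set K : ℝ := L1 * (|t2 - t1| * ((b - a) / 2)) + L2 * (|s2 - s1| * ((d - c) / 2)) with hK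
  have hbound : ∀ e1 ∈ Icc a b, ∀ e2 ∈ Icc c d, |e1 - (a + b) / 2| = (b - a) / 2 →
      |e2 - (c + d) / 2| = (d - c) / 2 →
      |f (t2 * e1 + (1 - t2) * ((a + b) / 2)) (s2 * e2 + (1 - s2) * ((c + d) / 2))
        - f (t1 * e1 + (1 - t1) * ((a + b) / 2)) (s1 * e2 + (1 - s1) * ((c + d) / 2))| ≤ K := by
    intro e1 he1 e2 he2 hx hy
    have := hf _ (hmemx t2 ht20 ht21 e1 he1) _ (hmemy s2 hs20 hs21 e2 he2)
      _ (hmemx t1 ht10 ht11 e1 he1) _ (hmemy s1 hs10 hs11 e2 he2)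
    rw [habsx e1 hx t2 t1, habsy e2 hy s2 s1] at this
    exact this
  have h1 := hbound a haa c hcc hea hec
  have h2 := hbound b hbb c hcc heb hec
  have h3 := hbound a haa d hdd hea hed
  have h4 := hbound b hbb d hdd heb hed
  rw [hG t2 s2, hG t1 s1]
  have hsum : (1:ℝ) / 4 *
      (f (t2 * a + (1 - t2) * ((a + b) / 2)) (s2 * c + (1 - s2) * ((c + d) / 2)) +
       f (t2 * b + (1 - t2) * ((a + b) / 2)) (s2 * c + (1 - s2) * ((c + d) / 2)) +
       f (t2 * a + (1 - t2) * ((a + b) / 2)) (s2 * d + (1 - s2) * ((c + d) / 2)) +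
       f (t2 * b + (1 - t2) * ((a + b) / 2)) (s2 * d + (1 - s2) * ((c + d) / 2))) -
      (1:ℝ) / 4 *
      (f (t1 * a + (1 - t1) * ((a + b) / 2)) (s1 * c + (1 - s1) * ((c + d) / 2)) +
       f (t1 * b + (1 - t1) * ((a + b) / 2)) (s1 * c + (1 - s1) * ((c + d) / 2)) +
       f (t1 * a + (1 - t1) * ((a + b) / 2)) (s1 * d + (1 - s1) * ((c + d) / 2)) +
       f (t1 * b + (1 - t1) * ((a + b) / 2)) (s1 * d + (1 - s1) * ((c + d) / 2))) =
      (1:ℝ) / 4 *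
      ((f (t2 * a + (1 - t2) * ((a + b) / 2)) (s2 * c + (1 - s2) * ((c + d) / 2)) -
        f (t1 * a + (1 - t1) * ((a + b) / 2)) (s1 * c + (1 - s1) * ((c + d) / 2))) +
       (f (t2 * b + (1 - t2) * ((a + b) / 2)) (s2 * c + (1 - s2) * ((c + d) / 2)) -
        f (t1 * b + (1 - t1) * ((a + b) / 2)) (s1 * c + (1 - s1) * ((c + d) / 2))) +
       (f (t2 * a + (1 - t2) * ((a + b) / 2)) (s2 * d + (1 - s2) * ((c + d) / 2)) -
        f (t1 * a + (1 - t1) * ((a + b) / 2)) (s1 * d + (1 - s1) * ((c + d) / 2))) +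
       (f (t2 * b + (1 - t2) * ((a + b) / 2)) (s2 * d + (1 - s2) * ((c + d) / 2)) -
        f (t1 * b + (1 - t1) * ((a + b) / 2)) (s1 * d + (1 - s1) * ((c + d) / 2)))) := by
    ring
  rw [hsum, abs_mul]
  have h14 : |(1:ℝ)/4| = 1/4 := by norm_num
  rw [h14]
  have htri : |(f (t2 * a + (1 - t2) * ((a + b) / 2)) (s2 * c + (1 - s2) * ((c + d) / 2)) -
        f (t1 * a + (1 - t1) * ((a + b) / 2)) (s1 * c + (1 - s1) * ((c + d) / 2))) +
       (f (t2 * b + (1 - t2) * ((a + b) / 2)) (s2 * c + (1 - s2) * ((c + d) / 2)) -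
        f (t1 * b + (1 - t1) * ((a + b) / 2)) (s1 * c + (1 - s1) * ((c + d) / 2))) +
       (f (t2 * a + (1 - t2) * ((a + b) / 2)) (s2 * d + (1 - s2) * ((c + d) / 2)) -
        f (t1 * a + (1 - t1) * ((a + b) / 2)) (s1 * d + (1 - s1) * ((c + d) / 2))) +
       (f (t2 * b + (1 - t2) * ((a + b) / 2)) (s2 * d + (1 - s2) * ((c + d) / 2)) -
        f (t1 * b + (1 - t1) * ((a + b) / 2)) (s1 * d + (1 - s1) * ((c + d) / 2)))| ≤ 4 * K := by
    calc _ ≤ _ := abs_add_le _ _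
    _ ≤ _ + _ := add_le_add (calc _ ≤ _ := abs_add_le _ _
          _ ≤ _ + _ := add_le_add (calc _ ≤ _ := abs_add_le _ _
                _ ≤ K + K := add_le_add h1 h2) h3) h4
    _ = 4 * K := by ring
  have habs1 : (0:ℝ) ≤ |t2 - t1| := abs_nonneg _
  have habs2 : (0:ℝ) ≤ |s2 - s1| := abs_nonneg _
  have hK0 : 0 ≤ K := by
    rw [hK]
    have := mul_nonneg (mul_nonneg hL1 habs1) (by linarith : (0:ℝ) ≤ (b - a) / 2)
    have := mul_nonneg (mul_nonneg hL2 habs2) (by linarith : (0:ℝ) ≤ (d - c) / 2)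
    nlinarith
  have htarget : L1 * (b - a) * |t2 - t1| + L2 * (d - c) * |s2 - s1| = 2 * K := by
    rw [hK]; ring
  linarith [htri]
end

section
/- Let f : Δ = [a,b]×[c,d] → ℝ be convex on the co-ordinates and G(t,s) the average of f over the four points (ta+(1-t)(a+b)/2, sc+(1-s)(c+d)/2), (tb+(1-t)(a+b)/2, sc+(1-s)(c+d)/2), (ta+(1-t)(a+b)/2, sd+(1-s)(c+d)/2), (tb+(1-t)(a+b)/2, sd+(1-s)(c+d)/2). Then for all (t,s) ∈ [0,1]²: f((a+b)/2,(c+d)/2) ≤ G(t,s) ≤ (f(a,c)+f(a,d)+f(b,c)+f(b,d))/4. -/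
open Set

lemma G_between_aux (a b : ℝ) (hab : a < b) (g : ℝ → ℝ)
    (hg : ConvexOn ℝ (Icc a b) g) (x x' : ℝ) (hxm : x ∈ Icc a b)
    (hx' : x' = a + b - x) :
    g ((a + b) / 2) ≤ (g x + g x') / 2 ∧ g x + g x' ≤ g a + g b := by
  obtain ⟨hax, hxb⟩ := hxm
  have hx'm : x' ∈ Icc a b := ⟨by linarith, by linarith⟩
  have hxm : x ∈ Icc a b := ⟨hax, hxb⟩
  have ham : a ∈ Icc a b := ⟨le_refl a, hab.le⟩
  have hbm : b ∈ Icc a b := ⟨hab.le, le_refl b⟩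
  have hba : (0:ℝ) < b - a := by linarith
  constructor
  · have h := hg.2 hxm hx'm (by norm_num : (0:ℝ) ≤ 1/2) (by norm_num : (0:ℝ) ≤ 1/2)
      (by norm_num : (1:ℝ)/2 + 1/2 = 1)
    rw [smul_eq_mul, smul_eq_mul, smul_eq_mul, smul_eq_mul,
      show (1/2:ℝ) * x + (1/2) * x' = (a+b)/2 by rw [hx']; ring] at h
    linarith
  · have hμ : (0:ℝ) ≤ (b - x)/(b - a) := div_nonneg (by linarith) hba.le
    have hν : (0:ℝ) ≤ (x - a)/(b - a) := div_nonneg (by linarith) hba.le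
    have hsum : (b - x)/(b - a) + (x - a)/(b - a) = 1 := by field_simp; ring
    have h1 := hg.2 ham hbm hμ hν hsum
    have h2 := hg.2 ham hbm hν hμ (by rw [add_comm]; exact hsum)
    rw [smul_eq_mul, smul_eq_mul, smul_eq_mul, smul_eq_mul,
      show (b - x)/(b - a) * a + (x - a)/(b - a) * b = x by field_simp; ring] at h1
    rw [smul_eq_mul, smul_eq_mul, smul_eq_mul, smul_eq_mul,
      show (x - a)/(b - a) * a + (b - x)/(b - a) * b = x' by rw [hx']; field_simp; ring] at h2
    have : (b - x)/(b - a) * g a + (x - a)/(b - a) * g b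
        + ((x - a)/(b - a) * g a + (b - x)/(b - a) * g b) = g a + g b := by
      linear_combination (g a + g b) * hsum
    linarith

theorem G_between (a b c d : ℝ) (hab : a < b) (hcd : c < d)
    (f : ℝ → ℝ → ℝ)
    (hx : ∀ y ∈ Icc c d, ConvexOn ℝ (Icc a b) (fun x => f x y))
    (hy : ∀ x ∈ Icc a b, ConvexOn ℝ (Icc c d) (fun y => f x y))
    (G : ℝ → ℝ → ℝ)
    (hG : ∀ t s, G t s = (1 / 4) *
      (f (t * a + (1 - t) * ((a + b) / 2)) (s * c + (1 - s) * ((c + d) / 2)) +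
       f (t * b + (1 - t) * ((a + b) / 2)) (s * c + (1 - s) * ((c + d) / 2)) +
       f (t * a + (1 - t) * ((a + b) / 2)) (s * d + (1 - s) * ((c + d) / 2)) +
       f (t * b + (1 - t) * ((a + b) / 2)) (s * d + (1 - s) * ((c + d) / 2)))) :
    ∀ t ∈ Icc (0:ℝ) 1, ∀ s ∈ Icc (0:ℝ) 1,
      f ((a + b) / 2) ((c + d) / 2) ≤ G t s ∧
      G t s ≤ (f a c + f a d + f b c + f b d) / 4 := by
  intro t ht s hs
  obtain ⟨ht0, ht1⟩ := ht
  obtain ⟨hs0, hs1⟩ := hs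
  set x1 : ℝ := t * a + (1 - t) * ((a + b) / 2) with hx1def
  set x2 : ℝ := t * b + (1 - t) * ((a + b) / 2) with hx2def
  set y1 : ℝ := s * c + (1 - s) * ((c + d) / 2) with hy1def
  set y2 : ℝ := s * d + (1 - s) * ((c + d) / 2) with hy2def
  have hx2 : x2 = a + b - x1 := by rw [hx1def, hx2def]; ring
  have hy2 : y2 = c + d - y1 := by rw [hy1def, hy2def]; ring
  have hx1m : x1 ∈ Icc a b := ⟨by rw [hx1def]; nlinarith, by rw [hx1def]; nlinarith⟩
  have hx2m : x2 ∈ Icc a b := ⟨by rw [hx2]; exact by have := hx1m.2; linarith,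
    by rw [hx2]; exact by have := hx1m.1; linarith⟩
  have hy1m : y1 ∈ Icc c d := ⟨by rw [hy1def]; nlinarith, by rw [hy1def]; nlinarith⟩
  have hnm : (c + d) / 2 ∈ Icc c d := ⟨by linarith, by linarith⟩
  have ham : a ∈ Icc a b := ⟨le_refl a, hab.le⟩
  have hbm : b ∈ Icc a b := ⟨hab.le, le_refl b⟩
  -- lower bound pieces
  have L0 := G_between_aux a b hab (fun x => f x ((c+d)/2)) (hx _ hnm) x1 x2 hx1m hx2
  have L1 := G_between_aux c d hcd (fun y => f x1 y) (hy _ hx1m) y1 y2 hy1m hy2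
  have L2 := G_between_aux c d hcd (fun y => f x2 y) (hy _ hx2m) y1 y2 hy1m hy2
  -- upper bound pieces
  have U1 := G_between_aux a b hab (fun x => f x y1) (hx _ hy1m) x1 x2 hx1m hx2
  have U2 := G_between_aux a b hab (fun x => f x y2)
    (hx _ (by constructor <;> (rw [hy2]; have := hy1m.1; have := hy1m.2; linarith))) x1 x2 hx1m hx2
  have Ua := G_between_aux c d hcd (fun y => f a y) (hy _ ham) y1 y2 hy1m hy2
  have Ub := G_between_aux c d hcd (fun y => f b y) (hy _ hbm) y1 y2 hy1m hy2
  rw [hG]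
  constructor
  · linarith [L0.1, L1.1, L2.1]
  · linarith [U1.2, U2.2, Ua.2, Ub.2]
end
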